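/- arXiv:2303.01073 — 5 statements merged into one kernel-verified Lean document; each statement's English description precedes it below -/
import Mathlib

section
/- Suppose f : ℝᵈ → ℝ is twice differentiable and its Hessian is ν-Hölder continuous with constant H_ν, i.e., ‖∇²f(x) − ∇²f(y)‖ ≤ H_ν ‖x − y‖^ν for all x, y. Then for any convex combination z̄ = Σᵢ λᵢ zᵢ, we have ‖∇f(z̄) − Σᵢ λᵢ ∇f(zᵢ)‖ ≤ (H_ν/(1+ν)) Σᵢ λᵢ ‖zᵢ − z̄‖^{1+ν}. -/
/-! Expanding each `∇f(zᵢ)` to first order around `z̄`, the linear terms cancel because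
`∑ λᵢ (zᵢ - z̄) = 0`, and the Hölder continuity of the Hessian bounds each Taylor remainder by
`H / (1 + ν) * ‖zᵢ - z̄‖ ^ (1 + ν)`. -/

open Finset

section HolderTaylor

variable {E F : Type*} [NormedAddCommGroup E] [NormedSpace ℝ E]
  [NormedAddCommGroup F] [NormedSpace ℝ F]

theorem hasDerivAt_sub_sub_smul_fderiv {g : E → F} {x v : E} {t : ℝ}
    (hg : DifferentiableAt ℝ g (x + t • v)) :
    HasDerivAt (fun s : ℝ => g (x + s • v) - g x - s • fderiv ℝ g x v)
      ((fderiv ℝ g (x + t • v) - fderiv ℝ g x) v) t := by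
  have hline : HasDerivAt (fun s : ℝ => x + s • v) v t := by
    simpa using ((hasDerivAt_id t).smul_const v).const_add x
  have hlinear : HasDerivAt (fun s : ℝ => s • fderiv ℝ g x v) (fderiv ℝ g x v) t := by
    simpa using (hasDerivAt_id t).smul_const (fderiv ℝ g x v)
  exact ((hg.hasFDerivAt.comp_hasDerivAt t hline).sub_const (g x)).sub hlinear

/-- On the segment `x + t • (y - x)`, the remainder is compared with
`B t = H / (1 + ν) * ‖y - x‖ ^ (1 + ν) * t ^ (1 + ν)`, whose derivative dominates its own. -/
theorem norm_sub_sub_fderiv_le_of_holder {g : E → F} (hg : ∀ x, DifferentiableAt ℝ g x)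
    {ν H : ℝ} (hν : 0 ≤ ν) (hHolder : ∀ x y, ‖fderiv ℝ g x - fderiv ℝ g y‖ ≤ H * ‖x - y‖ ^ ν)
    (x y : E) :
    ‖g y - g x - fderiv ℝ g x (y - x)‖ ≤ H / (1 + ν) * ‖y - x‖ ^ (1 + ν) := by
  set v := y - x
  have hν₁ : 1 + ν ≠ 0 := by positivity
  set B : ℝ → ℝ := fun t => H / (1 + ν) * ‖v‖ ^ (1 + ν) * t ^ (1 + ν)
  have hB : ∀ t, HasDerivAt B (H * ‖v‖ ^ (1 + ν) * t ^ ν) t := by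
    intro t
    have h := (Real.hasDerivAt_rpow_const (x := t) (p := 1 + ν) (Or.inr (by linarith))).const_mul
      (H / (1 + ν) * ‖v‖ ^ (1 + ν))
    rw [add_sub_cancel_left] at h
    exact h.congr_deriv (by field_simp)
  have hderiv_le : ∀ t ∈ Set.Ico (0 : ℝ) 1,
      ‖(fderiv ℝ g (x + t • v) - fderiv ℝ g x) v‖ ≤ H * ‖v‖ ^ (1 + ν) * t ^ ν := by
    rintro t ⟨ht, -⟩
    calc ‖(fderiv ℝ g (x + t • v) - fderiv ℝ g x) v‖
        ≤ ‖fderiv ℝ g (x + t • v) - fderiv ℝ g x‖ * ‖v‖ := ContinuousLinearMap.le_opNorm _ _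
      _ ≤ H * (t * ‖v‖) ^ ν * ‖v‖ := by
        gcongr
        simpa [norm_smul, abs_of_nonneg ht] using hHolder (x + t • v) x
      _ = H * ‖v‖ ^ (1 + ν) * t ^ ν := by
        rw [Real.mul_rpow ht (norm_nonneg v), Real.rpow_add' (norm_nonneg v) hν₁, Real.rpow_one]
        ring
  have h := image_norm_le_of_norm_deriv_right_le_deriv_boundary (a := 0) (b := 1)
    (fun t _ => (hasDerivAt_sub_sub_smul_fderiv (hg _)).continuousAt.continuousWithinAt)
    (fun t _ => (hasDerivAt_sub_sub_smul_fderiv (hg _)).hasDerivWithinAt)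
    (by simp [B, Real.zero_rpow hν₁]) hB hderiv_le (x := 1) (by simp)
  simpa [B, v] using h

end HolderTaylor

theorem norm_map_sum_smul_sub_sum_smul_map_le {E F ι : Type*} [NormedAddCommGroup E]
    [Module ℝ E] [NormedAddCommGroup F] [NormedSpace ℝ F] (s : Finset ι) {w : ι → ℝ}
    (hw₀ : ∀ i ∈ s, 0 ≤ w i) (hw₁ : ∑ i ∈ s, w i = 1) (z : ι → E) {c : E}
    (hc : ∑ i ∈ s, w i • z i = c) (g : E → F) (A : E →L[ℝ] F) :
    ‖g c - ∑ i ∈ s, w i • g (z i)‖ ≤ ∑ i ∈ s, w i * ‖g (z i) - g c - A (z i - c)‖ := by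
  have hremainder : g c - ∑ i ∈ s, w i • g (z i)
      = -∑ i ∈ s, w i • (g (z i) - g c - A (z i - c)) := by
    simp only [smul_sub, ← map_smul, sum_sub_distrib, ← map_sum, ← sum_smul, hw₁, one_smul, hc,
      sub_self, map_zero]
    abel
  calc ‖g c - ∑ i ∈ s, w i • g (z i)‖
      ≤ ∑ i ∈ s, ‖w i • (g (z i) - g c - A (z i - c))‖ := by
        rw [hremainder, norm_neg]; exact norm_sum_le _ _
    _ = ∑ i ∈ s, w i * ‖g (z i) - g c - A (z i - c)‖ := by
        refine sum_congr rfl fun i hi => ?_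
        rw [norm_smul, Real.norm_of_nonneg (hw₀ i hi)]

theorem gradient_jensen_general (d n : ℕ) (f : EuclideanSpace ℝ (Fin d) → ℝ)
    (hf' : ∀ x, DifferentiableAt ℝ (gradient f) x)
    (ν : ℝ) (hν0 : 0 ≤ ν)
    (H : ℝ)
    (hHolder : ∀ x y, ‖fderiv ℝ (gradient f) x - fderiv ℝ (gradient f) y‖ ≤ H * ‖x - y‖ ^ ν)
    (z : Fin n → EuclideanSpace ℝ (Fin d)) (lam : Fin n → ℝ)
    (hlam : ∀ i, 0 ≤ lam i) (hsum : ∑ i, lam i = 1)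
    (zbar : EuclideanSpace ℝ (Fin d)) (hzbar : zbar = ∑ i, lam i • z i) :
    ‖gradient f zbar - ∑ i, lam i • gradient f (z i)‖
      ≤ H / (1 + ν) * ∑ i, lam i * ‖z i - zbar‖ ^ (1 + ν) := by
  calc ‖gradient f zbar - ∑ i, lam i • gradient f (z i)‖
      ≤ ∑ i, lam i * ‖gradient f (z i) - gradient f zbar
          - fderiv ℝ (gradient f) zbar (z i - zbar)‖ :=
        norm_map_sum_smul_sub_sum_smul_map_le _ (fun i _ => hlam i) hsum z hzbar.symm _
          (fderiv ℝ (gradient f) zbar)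
    _ ≤ ∑ i, lam i * (H / (1 + ν) * ‖z i - zbar‖ ^ (1 + ν)) :=
        sum_le_sum fun i _ => mul_le_mul_of_nonneg_left
          (norm_sub_sub_fderiv_le_of_holder hf' hν0 hHolder zbar (z i)) (hlam i)
    _ = H / (1 + ν) * ∑ i, lam i * ‖z i - zbar‖ ^ (1 + ν) := by
        rw [mul_sum]; exact sum_congr rfl fun i _ => by ring

theorem gradient_jensen (d n : ℕ) (f : EuclideanSpace ℝ (Fin d) → ℝ)
    (hf : ∀ x, DifferentiableAt ℝ f x)
    (hf' : ∀ x, DifferentiableAt ℝ (gradient f) x)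
    (ν : ℝ) (hν0 : 0 ≤ ν) (hν1 : ν ≤ 1)
    (H : ℝ) (hH : 0 ≤ H)
    (hHolder : ∀ x y, ‖fderiv ℝ (gradient f) x - fderiv ℝ (gradient f) y‖ ≤ H * ‖x - y‖ ^ ν)
    (z : Fin n → EuclideanSpace ℝ (Fin d)) (lam : Fin n → ℝ)
    (hlam : ∀ i, 0 ≤ lam i) (hsum : ∑ i, lam i = 1)
    (zbar : EuclideanSpace ℝ (Fin d)) (hzbar : zbar = ∑ i, lam i • z i) :
    ‖gradient f zbar - ∑ i, lam i • gradient f (z i)‖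
      ≤ H / (1 + ν) * ∑ i, lam i * ‖z i - zbar‖ ^ (1 + ν) :=
  gradient_jensen_general d n f hf' ν hν0 H hHolder z lam hlam hsum zbar hzbar
end

section
/- Suppose f : ℝᵈ → ℝ is twice differentiable with ν-Hölder continuous Hessian with constant H_ν. Then for all x, y ∈ ℝᵈ: f(x) − f(y) ≤ (1/2)⟨∇f(x) + ∇f(y), x − y⟩ + 2 H_ν ‖x − y‖^{2+ν} / ((1+ν)(2+ν)(3+ν)). -/
/-!
Restrict `f` to the segment: `φ t = f (lineMap y x t)` has `φ' t = ⟪∇f, x - y⟫` and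
`φ'' t = G t = ⟪∇²f (x - y), x - y⟫`, and `G` is `ν`-Hölder with constant `K = H ‖x - y‖^(2+ν)`.
The symmetric trapezoidal error `ψ r = φ (m + r) - φ (m - r) - r (φ' (m + r) + φ' (m - r))`
vanishes at `r = 0` and has `ψ' r = r (G (m - r) - G (m + r)) ≤ K 2^ν r^(1+ν)`, so
`ψ r ≤ K 2^ν r^(2+ν) / (2+ν)`. On `[0, 1]` this is `K / (4 (2+ν))`, which is at most
`2K / ((1+ν)(2+ν)(3+ν))` because `(1+ν)(3+ν) ≤ 8` for `ν ≤ 1`.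
-/

open Real

open scoped RealInnerProductSpace

section Trapezoid

variable {φ g G : ℝ → ℝ} {K ν : ℝ}

theorem midpoint_trapezoid_error_le_of_holder (hφ : ∀ t, HasDerivAt φ (g t) t)
    (hg : ∀ t, HasDerivAt g (G t) t) (hG : ∀ s t, |G s - G t| ≤ K * |s - t| ^ ν) (hν : 0 ≤ ν)
    (m : ℝ) {r : ℝ} (hr : 0 ≤ r) :
    φ (m + r) - φ (m - r) - r * (g (m + r) + g (m - r)) ≤ K * 2 ^ ν * r ^ (2 + ν) / (2 + ν) := by
  set ψ : ℝ → ℝ := fun t ↦ φ (m + t) - φ (m - t) - t * (g (m + t) + g (m - t))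
  have hψ : ∀ t, HasDerivAt ψ (t * (G (m - t) - G (m + t))) t := by
    intro t
    have hφr := (hφ (m + t)).comp_const_add m t
    have hφl := (hφ (m - t)).comp_const_sub m t
    have hgr := (hg (m + t)).comp_const_add m t
    have hgl := (hg (m - t)).comp_const_sub m t
    refine ((hφr.sub hφl).sub ((hasDerivAt_id t).mul (hgr.add hgl))).congr_deriv ?_
    simp only [id_eq, Pi.add_apply]
    ring
  have hB : ∀ t, HasDerivAt (fun t ↦ K * 2 ^ ν * t ^ (2 + ν) / (2 + ν))
      (K * 2 ^ ν * t ^ (1 + ν)) t := by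
    intro t
    refine (((hasDerivAt_rpow_const (p := 2 + ν) (Or.inr (by linarith))).const_mul
      (K * 2 ^ ν)).div_const (2 + ν)).congr_deriv ?_
    rw [show 2 + ν - 1 = 1 + ν by ring]
    field_simp
  have hbound : ∀ t, 0 ≤ t → t * (G (m - t) - G (m + t)) ≤ K * 2 ^ ν * t ^ (1 + ν) := by
    intro t ht
    calc t * (G (m - t) - G (m + t)) ≤ t * (K * |(m - t) - (m + t)| ^ ν) :=
          mul_le_mul_of_nonneg_left ((le_abs_self _).trans (hG _ _)) ht
      _ = K * 2 ^ ν * t ^ (1 + ν) := by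
          rw [show (m - t) - (m + t) = -(2 * t) by ring, abs_neg, abs_of_nonneg (by positivity),
            mul_rpow zero_le_two ht, rpow_add' ht (by positivity), rpow_one]
          ring
  refine image_le_of_deriv_right_le_deriv_boundary (f := ψ)
    (fun t _ ↦ (hψ t).continuousAt.continuousWithinAt) (fun t _ ↦ (hψ t).hasDerivWithinAt)
    ?_ (fun t _ ↦ (hB t).continuousAt.continuousWithinAt) (fun t _ ↦ (hB t).hasDerivWithinAt)
    (fun t ht ↦ hbound t ht.1) ⟨hr, le_rfl⟩
  simp [ψ, zero_rpow (by positivity : 2 + ν ≠ 0)]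

theorem trapezoid_error_le_of_holder (hφ : ∀ t, HasDerivAt φ (g t) t)
    (hg : ∀ t, HasDerivAt g (G t) t) (hG : ∀ s t, |G s - G t| ≤ K * |s - t| ^ ν) (hν : 0 ≤ ν)
    {a b : ℝ} (hab : a ≤ b) :
    φ b - φ a - (b - a) / 2 * (g a + g b) ≤ K * (b - a) ^ (2 + ν) / (4 * (2 + ν)) := by
  have h := midpoint_trapezoid_error_le_of_holder hφ hg hG hν ((a + b) / 2)
    (r := (b - a) / 2) (by linarith)
  rw [show (a + b) / 2 + (b - a) / 2 = b by ring, show (a + b) / 2 - (b - a) / 2 = a by ring,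
    div_rpow (by linarith) zero_le_two, rpow_add zero_lt_two, rpow_two] at h
  convert h using 1
  · ring
  · field_simp
    ring

end Trapezoid

section Line

variable {E : Type*} [NormedAddCommGroup E] [InnerProductSpace ℝ E] {x y : E}

theorem DifferentiableAt.hasDerivAt_comp_lineMap [CompleteSpace E] {f : E → ℝ} {t : ℝ}
    (hf : DifferentiableAt ℝ f (AffineMap.lineMap y x t)) :
    HasDerivAt (fun s ↦ f (AffineMap.lineMap y x s))
      ⟪gradient f (AffineMap.lineMap y x t), x - y⟫ t := by
  rw [inner_gradient_left]
  exact hf.hasFDerivAt.comp_hasDerivAt t AffineMap.hasDerivAt_lineMap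

theorem DifferentiableAt.hasDerivAt_inner_comp_lineMap {F : E → E} {t : ℝ}
    (hF : DifferentiableAt ℝ F (AffineMap.lineMap y x t)) :
    HasDerivAt (fun s ↦ ⟪F (AffineMap.lineMap y x s), x - y⟫)
      ⟪fderiv ℝ F (AffineMap.lineMap y x t) (x - y), x - y⟫ t := by
  simpa using (hF.hasFDerivAt.comp_hasDerivAt t AffineMap.hasDerivAt_lineMap).inner ℝ
    (hasDerivAt_const t (x - y))

theorem norm_lineMap_sub_lineMap (x y : E) (s t : ℝ) :
    ‖AffineMap.lineMap y x s - AffineMap.lineMap y x t‖ = |s - t| * ‖x - y‖ := by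
  rw [← dist_eq_norm, dist_lineMap_lineMap, Real.dist_eq, dist_comm, dist_eq_norm]

theorem abs_inner_apply_lineMap_sub_le {F : E → E →L[ℝ] E} {H ν : ℝ}
    (hF : ∀ p q, ‖F p - F q‖ ≤ H * ‖p - q‖ ^ ν) (hν : 0 ≤ ν) (s t : ℝ) :
    |⟪F (AffineMap.lineMap y x s) (x - y), x - y⟫
        - ⟪F (AffineMap.lineMap y x t) (x - y), x - y⟫|
      ≤ H * ‖x - y‖ ^ (2 + ν) * |s - t| ^ ν := by
  rw [← inner_sub_left, ← sub_apply]
  calc _ ≤ ‖(F (AffineMap.lineMap y x s) - F (AffineMap.lineMap y x t)) (x - y)‖ * ‖x - y‖ :=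
        abs_real_inner_le_norm _ _
    _ ≤ ‖F (AffineMap.lineMap y x s) - F (AffineMap.lineMap y x t)‖ * ‖x - y‖ * ‖x - y‖ := by
        gcongr
        exact ContinuousLinearMap.le_opNorm _ _
    _ ≤ H * (|s - t| * ‖x - y‖) ^ ν * ‖x - y‖ * ‖x - y‖ := by
        gcongr
        rw [← norm_lineMap_sub_lineMap]
        exact hF _ _
    _ = H * ‖x - y‖ ^ (2 + ν) * |s - t| ^ ν := by
        rw [mul_rpow (abs_nonneg _) (norm_nonneg _), add_comm, rpow_add' (norm_nonneg _)
          (by positivity), rpow_two]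
        ring

end Line

theorem trapezoidal_rule_error (d : ℕ) (f : EuclideanSpace ℝ (Fin d) → ℝ)
    (hf : ∀ x, DifferentiableAt ℝ f x)
    (hf' : ∀ x, DifferentiableAt ℝ (gradient f) x)
    (ν : ℝ) (hν0 : 0 ≤ ν) (hν1 : ν ≤ 1)
    (H : ℝ) (hH : 0 ≤ H)
    (hHolder : ∀ x y, ‖fderiv ℝ (gradient f) x - fderiv ℝ (gradient f) y‖ ≤ H * ‖x - y‖ ^ ν)
    (x y : EuclideanSpace ℝ (Fin d)) :
    f x - f y ≤ (1 / 2) * inner ℝ (gradient f x + gradient f y) (x - y)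
      + 2 * H * ‖x - y‖ ^ (2 + ν) / ((1 + ν) * (2 + ν) * (3 + ν)) := by
  have key := trapezoid_error_le_of_holder (fun _ ↦ (hf _).hasDerivAt_comp_lineMap)
    (fun _ ↦ (hf' _).hasDerivAt_inner_comp_lineMap)
    (abs_inner_apply_lineMap_sub_le (x := x) (y := y) hHolder hν0) hν0 zero_le_one
  simp only [AffineMap.lineMap_apply_zero, AffineMap.lineMap_apply_one, sub_zero, one_rpow,
    mul_one] at key
  have hconst : H * ‖x - y‖ ^ (2 + ν) / (4 * (2 + ν))
      ≤ 2 * H * ‖x - y‖ ^ (2 + ν) / ((1 + ν) * (2 + ν) * (3 + ν)) := by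
    have hN : 0 ≤ H * ‖x - y‖ ^ (2 + ν) := by positivity
    have hν8 : (1 + ν) * (3 + ν) ≤ 8 := by nlinarith
    rw [div_le_div_iff₀ (by positivity) (by positivity)]
    nlinarith [mul_nonneg (mul_nonneg hN (by linarith : (0 : ℝ) ≤ 2 + ν)) (sub_nonneg.2 hν8)]
  rw [inner_add_left]
  linarith
end

section
/- Let f : ℝᵈ → ℝ be twice differentiable with ν-Hölder continuous Hessian with constant H_ν for some ν ∈ [0,1]. Define the heavy-ball iterates with v₀ = 0, vₖ = vₖ₋₁ − (1/ℓ)∇f(xₖ₋₁), xₖ = xₖ₋₁ + vₖ for ℓ > 0, and x̄ₖ = (1/k) Σ_{i=0}^{k−1} xᵢ, Sₖ = Σ_{i=1}^{k} ‖vᵢ‖². Then for all k ≥ 1: ‖∇f(x̄ₖ)‖ ≤ (ℓ/k)‖vₖ‖ + (H_ν/(1+ν)) (k Sₖ/8)^{(1+ν)/2}. -/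
/-!
Because `v` accumulates the gradients, `∑_{i<k} ∇f(xᵢ) = -ℓ vₖ`. Replacing each `∇f(xᵢ)` by its
first-order expansion around the average `x̄ₖ` costs at most `H/(1+ν) ‖xᵢ - x̄ₖ‖^(1+ν)`, and the
linear terms cancel since the deviations `xᵢ - x̄ₖ` sum to zero; hence
`k ‖∇f(x̄ₖ)‖ ≤ ℓ ‖vₖ‖ + H/(1+ν) ∑ᵢ ‖xᵢ - x̄ₖ‖^(1+ν)`. By concavity of `t ↦ t^((1+ν)/2)` that sum is
at most `k` times the `(1+ν)/2`-th power of the mean squared deviation, which equals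
`k⁻² ∑_{i<j<k} ‖xⱼ - xᵢ‖²`. Cauchy–Schwarz on `xⱼ - xᵢ = ∑_{i<m≤j} vₘ` then counts each `‖vₘ‖²`
with weight `∑_{i<m≤j<k} (j - i) = k m (k - m)/2 ≤ k³/8`, so the mean squared deviation is at
most `k Sₖ / 8`.
-/

open Finset

theorem norm_sub_sub_fderiv_le_of_fderiv_holder {E F : Type*}
    [NormedAddCommGroup E] [NormedSpace ℝ E] [NormedAddCommGroup F] [NormedSpace ℝ F]
    {G : E → F} (hG : ∀ z, DifferentiableAt ℝ G z) {ν H : ℝ} (hν : 0 ≤ ν) {p : E}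
    (hHolder : ∀ z, ‖fderiv ℝ G z - fderiv ℝ G p‖ ≤ H * ‖z - p‖ ^ ν) (q : E) :
    ‖G q - G p - fderiv ℝ G p (q - p)‖ ≤ H / (1 + ν) * ‖q - p‖ ^ (1 + ν) := by
  set w := q - p
  have hν1 : (1 + ν) ≠ 0 := by positivity
  -- The remainder along the segment is fenced by `C t^(1+ν)`, whose derivative dominates its own.
  let φ : ℝ → F := fun t => G (p + t • w) - G p - t • fderiv ℝ G p w
  let C := H / (1 + ν) * ‖w‖ ^ (1 + ν)
  have hφ : ∀ t, HasDerivAt φ (fderiv ℝ G (p + t • w) w - fderiv ℝ G p w) t := by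
    intro t
    have hline : HasDerivAt (fun s : ℝ => p + s • w) w t := by
      simpa using ((hasDerivAt_id t).smul_const w).const_add p
    exact (((hG _).hasFDerivAt.comp_hasDerivAt t hline).sub_const (G p)).sub
      ((hasDerivAt_id t).smul_const _ |>.congr_deriv (one_smul ℝ _))
  have hB : ∀ t, HasDerivAt (fun s => C * s ^ (1 + ν)) (C * ((1 + ν) * t ^ ν)) t := by
    intro t
    simpa using ((Real.hasDerivAt_rpow_const (p := 1 + ν) (Or.inr (by linarith))).const_mul C)
  have hderiv_le : ∀ t ∈ Set.Ico (0 : ℝ) 1,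
      ‖fderiv ℝ G (p + t • w) w - fderiv ℝ G p w‖ ≤ C * ((1 + ν) * t ^ ν) := by
    rintro t ⟨ht, -⟩
    calc ‖fderiv ℝ G (p + t • w) w - fderiv ℝ G p w‖
        ≤ ‖fderiv ℝ G (p + t • w) - fderiv ℝ G p‖ * ‖w‖ :=
          (fderiv ℝ G (p + t • w) - fderiv ℝ G p).le_opNorm w
      _ ≤ H * ‖t • w‖ ^ ν * ‖w‖ := by
          gcongr; simpa using hHolder (p + t • w)
      _ = C * ((1 + ν) * t ^ ν) := by
          simp only [C]
          rw [norm_smul, Real.norm_of_nonneg ht, Real.mul_rpow ht (norm_nonneg w),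
            Real.rpow_add' (norm_nonneg w) hν1, Real.rpow_one]
          field_simp
  have hfence := image_norm_le_of_norm_deriv_right_le_deriv_boundary (f := φ) (a := 0) (b := 1)
    (fun t _ => (hφ t).continuousAt.continuousWithinAt) (fun t _ => (hφ t).hasDerivWithinAt)
    (by simp [φ, Real.zero_rpow hν1]) hB hderiv_le (Set.right_mem_Icc.2 zero_le_one)
  simpa [φ, w] using hfence

theorem norm_card_smul_sub_sum_le_of_fderiv_holder {E F ι : Type*}
    [NormedAddCommGroup E] [NormedSpace ℝ E] [NormedAddCommGroup F] [NormedSpace ℝ F]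
    {G : E → F} (hG : ∀ z, DifferentiableAt ℝ G z) {ν H : ℝ} (hν : 0 ≤ ν) {c : E}
    (hHolder : ∀ z, ‖fderiv ℝ G z - fderiv ℝ G c‖ ≤ H * ‖z - c‖ ^ ν)
    (s : Finset ι) (y : ι → E) (hc : ∑ i ∈ s, (y i - c) = 0) :
    ‖(#s : ℝ) • G c - ∑ i ∈ s, G (y i)‖ ≤ H / (1 + ν) * ∑ i ∈ s, ‖y i - c‖ ^ (1 + ν) := by
  have hlin : ∑ i ∈ s, fderiv ℝ G c (y i - c) = 0 := by rw [← map_sum, hc, map_zero]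
  have hsplit : (#s : ℝ) • G c - ∑ i ∈ s, G (y i)
      = -∑ i ∈ s, (G (y i) - G c - fderiv ℝ G c (y i - c)) := by
    simp only [sum_sub_distrib, hlin, sum_const, Nat.cast_smul_eq_nsmul]
    abel
  rw [hsplit, norm_neg, mul_sum]
  exact (norm_sum_le _ _).trans
    (sum_le_sum fun i _ => norm_sub_sub_fderiv_le_of_fderiv_holder hG hν hHolder (y i))

theorem sum_range_sum_range_norm_sub_sq {E : Type*} [NormedAddCommGroup E]
    [InnerProductSpace ℝ E] (a : ℕ → E) (n : ℕ) :
    ∑ j ∈ range n, ∑ i ∈ range j, ‖a j - a i‖ ^ 2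
      = n * ∑ i ∈ range n, ‖a i‖ ^ 2 - ‖∑ i ∈ range n, a i‖ ^ 2 := by
  induction n with
  | zero => simp
  | succ n ih =>
    have hnew : ∑ i ∈ range n, ‖a n - a i‖ ^ 2
        = n * ‖a n‖ ^ 2 - 2 * inner ℝ (a n) (∑ i ∈ range n, a i) + ∑ i ∈ range n, ‖a i‖ ^ 2 := by
      simp only [norm_sub_sq_real, sum_add_distrib, sum_sub_distrib, inner_sum, ← mul_sum,
        sum_const, card_range, nsmul_eq_mul]
    rw [sum_range_succ, ih, hnew, sum_range_succ, sum_range_succ, norm_add_sq_real,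
      real_inner_comm]
    push_cast
    ring

theorem sum_range_natCast (n : ℕ) : ∑ i ∈ range n, (i : ℝ) = n * (n - 1) / 2 := by
  induction n with
  | zero => simp
  | succ n ih => rw [sum_range_succ, ih]; push_cast; ring

theorem sum_range_sum_range_add_sub (m n : ℕ) :
    ∑ j ∈ range n, ∑ i ∈ range m, ((m + j : ℝ) - i) = m * n * (m + n) / 2 := by
  induction n with
  | zero => simp
  | succ n ih =>
    rw [sum_range_succ, ih, sum_sub_distrib, sum_const, card_range, nsmul_eq_mul,
      sum_range_natCast]
    push_cast
    ring

theorem sub_eq_sum_Ioc_of_increments {E : Type*} [AddCommGroup E] {x v : ℕ → E}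
    (hx : ∀ m, x (m + 1) = x m + v (m + 1)) {i j : ℕ} (hij : i ≤ j) :
    x j - x i = ∑ m ∈ Ioc i j, v m := by
  induction j, hij using Nat.le_induction with
  | base => simp
  | succ j hij ih => rw [sum_Ioc_succ_top hij, ← ih, hx]; abel

theorem norm_sub_sq_le_of_increments {E : Type*} [NormedAddCommGroup E] {x v : ℕ → E}
    (hx : ∀ m, x (m + 1) = x m + v (m + 1)) {i j : ℕ} (hij : i ≤ j) :
    ‖x j - x i‖ ^ 2 ≤ ((j : ℝ) - i) * ∑ m ∈ Ioc i j, ‖v m‖ ^ 2 := by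
  calc ‖x j - x i‖ ^ 2 ≤ (∑ m ∈ Ioc i j, ‖v m‖) ^ 2 := by
        rw [sub_eq_sum_Ioc_of_increments hx hij]
        gcongr
        exact norm_sum_le _ _
    _ ≤ #(Ioc i j) * ∑ m ∈ Ioc i j, ‖v m‖ ^ 2 := sq_sum_le_card_mul_sum_sq
    _ = ((j : ℝ) - i) * ∑ m ∈ Ioc i j, ‖v m‖ ^ 2 := by
        rw [Nat.card_Ioc, Nat.cast_sub hij]

theorem sum_range_sum_range_sub_le {m k : ℕ} (hmk : m ≤ k) :
    ∑ j ∈ Ico m k, ∑ i ∈ range m, ((j : ℝ) - i) ≤ k ^ 3 / 8 := by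
  obtain ⟨n, rfl⟩ := Nat.exists_eq_add_of_le hmk
  rw [sum_Ico_eq_sum_range, Nat.add_sub_cancel_left]
  push_cast
  rw [sum_range_sum_range_add_sub]
  nlinarith [sq_nonneg ((m : ℝ) - n), mul_nonneg (m.cast_nonneg (α := ℝ)) (n.cast_nonneg (α := ℝ))]

theorem sum_range_sum_range_norm_sub_sq_le_of_increments {E : Type*} [NormedAddCommGroup E]
    {x v : ℕ → E} (hx : ∀ m, x (m + 1) = x m + v (m + 1)) (k : ℕ) :
    ∑ j ∈ range k, ∑ i ∈ range j, ‖x j - x i‖ ^ 2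
      ≤ k ^ 3 / 8 * ∑ m ∈ Icc 1 k, ‖v m‖ ^ 2 := by
  calc ∑ j ∈ range k, ∑ i ∈ range j, ‖x j - x i‖ ^ 2
      ≤ ∑ j ∈ range k, ∑ i ∈ range j, ∑ m ∈ Ioc i j, ((j : ℝ) - i) * ‖v m‖ ^ 2 := by
        gcongr with j _ i hi
        rw [← mul_sum]
        exact norm_sub_sq_le_of_increments hx (mem_range.1 hi).le
    _ = ∑ j ∈ range k, ∑ m ∈ Ioc 0 j, ∑ i ∈ range m, ((j : ℝ) - i) * ‖v m‖ ^ 2 := by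
        refine sum_congr rfl fun j _ => sum_comm' fun i m => ?_
        simp only [mem_range, mem_Ioc]
        omega
    _ = ∑ m ∈ Icc 1 k, (∑ j ∈ Ico m k, ∑ i ∈ range m, ((j : ℝ) - i)) * ‖v m‖ ^ 2 := by
        simp only [sum_mul]
        refine sum_comm' fun j m => ?_
        simp only [mem_range, mem_Ioc, mem_Icc, mem_Ico]
        omega
    _ ≤ ∑ m ∈ Icc 1 k, k ^ 3 / 8 * ‖v m‖ ^ 2 := by
        gcongr with m hm
        exact sum_range_sum_range_sub_le (mem_Icc.1 hm).2
    _ = k ^ 3 / 8 * ∑ m ∈ Icc 1 k, ‖v m‖ ^ 2 := (mul_sum _ _ _).symm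

theorem sum_range_norm_sub_sq_le_of_increments {E : Type*} [NormedAddCommGroup E]
    [InnerProductSpace ℝ E] {x v : ℕ → E} (hx : ∀ m, x (m + 1) = x m + v (m + 1))
    {k : ℕ} (hk : 1 ≤ k) {c : E} (hc : ∑ i ∈ range k, (x i - c) = 0) :
    ∑ i ∈ range k, ‖x i - c‖ ^ 2 ≤ k ^ 2 / 8 * ∑ m ∈ Icc 1 k, ‖v m‖ ^ 2 := by
  have hk0 : (0 : ℝ) < k := by exact_mod_cast hk
  have hpairs := sum_range_sum_range_norm_sub_sq (fun i => x i - c) k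
  simp only [sub_sub_sub_cancel_right, hc, norm_zero] at hpairs
  have hbound := sum_range_sum_range_norm_sub_sq_le_of_increments hx k
  rw [hpairs] at hbound
  rw [← mul_le_mul_iff_right₀ hk0]
  linarith

theorem sum_rpow_le_card_mul_rpow_mean {ι : Type*} (s : Finset ι) {a : ι → ℝ}
    (ha : ∀ i ∈ s, 0 ≤ a i) {p : ℝ} (hp₀ : 0 ≤ p) (hp₁ : p ≤ 1) :
    ∑ i ∈ s, a i ^ p ≤ #s * ((∑ i ∈ s, a i) / #s) ^ p := by
  rcases s.eq_empty_or_nonempty with rfl | hs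
  · simp
  have hcard : (0 : ℝ) < #s := by exact_mod_cast hs.card_pos
  have hjensen := (Real.concaveOn_rpow hp₀ hp₁).le_map_sum (t := s) (w := fun _ => (#s : ℝ)⁻¹)
    (p := a) (fun _ _ => by positivity) (by simp [hcard.ne']) ha
  simp only [smul_eq_mul, ← mul_sum] at hjensen
  rw [← inv_mul_eq_div]
  exact (inv_mul_le_iff₀ hcard).1 hjensen

theorem sum_norm_rpow_le_card_mul_rpow_mean_sq {E ι : Type*} [NormedAddCommGroup E]
    (s : Finset ι) (y : ι → E) {q : ℝ} (hq₀ : 0 ≤ q) (hq₂ : q ≤ 2) :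
    ∑ i ∈ s, ‖y i‖ ^ q ≤ #s * ((∑ i ∈ s, ‖y i‖ ^ 2) / #s) ^ (q / 2) := by
  have hsq : ∀ i, ‖y i‖ ^ q = (‖y i‖ ^ 2) ^ (q / 2) := fun i => by
    rw [← Real.rpow_natCast, ← Real.rpow_mul (norm_nonneg _)]
    ring_nf
  simp only [hsq]
  exact sum_rpow_le_card_mul_rpow_mean s (fun i _ => by positivity) (by linarith) (by linarith)

theorem sum_range_eq_neg_smul_of_momentum {E : Type*} [AddCommGroup E] [Module ℝ E]
    {ℓ : ℝ} (hℓ : ℓ ≠ 0) {v g : ℕ → E} (hv0 : v 0 = 0)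
    (hv : ∀ m, v (m + 1) = v m - (1 / ℓ) • g m) (k : ℕ) :
    ∑ i ∈ range k, g i = -(ℓ • v k) := by
  induction k with
  | zero => simp [hv0]
  | succ k ih =>
    rw [sum_range_succ, ih, hv, smul_sub, smul_smul, mul_one_div_cancel hℓ, one_smul]
    abel

theorem grad_norm_xbar_upperbound_general (d : ℕ) (f : EuclideanSpace ℝ (Fin d) → ℝ)
    (hf' : ∀ x, DifferentiableAt ℝ (gradient f) x)
    (ν : ℝ) (hν0 : 0 ≤ ν) (hν1 : ν ≤ 1)
    (H : ℝ) (hH : 0 ≤ H)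
    (hHolder : ∀ x y, ‖fderiv ℝ (gradient f) x - fderiv ℝ (gradient f) y‖ ≤ H * ‖x - y‖ ^ ν)
    (ℓ : ℝ) (hℓ : 0 < ℓ)
    (x v : ℕ → EuclideanSpace ℝ (Fin d))
    (hv0 : v 0 = 0)
    (hv : ∀ k, 1 ≤ k → v k = v (k - 1) - (1 / ℓ) • gradient f (x (k - 1)))
    (hx : ∀ k, 1 ≤ k → x k = x (k - 1) + v k)
    (xbar : ℕ → EuclideanSpace ℝ (Fin d))
    (hxbar : ∀ k, 1 ≤ k → xbar k = (1 / (k : ℝ)) • ∑ i ∈ range k, x i)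
    (S : ℕ → ℝ) (hS : ∀ k, S k = ∑ i ∈ Icc 1 k, ‖v i‖ ^ 2)
    (k : ℕ) (hk : 1 ≤ k) :
    ‖gradient f (xbar k)‖
      ≤ (ℓ / k) * ‖v k‖ + H / (1 + ν) * ((k * S k) / 8) ^ ((1 + ν) / 2) := by
  have hk0 : (0 : ℝ) < k := by exact_mod_cast hk
  have hmean : ∑ i ∈ range k, (x i - xbar k) = 0 := by
    rw [sum_sub_distrib, sum_const, card_range, ← Nat.cast_smul_eq_nsmul ℝ, hxbar k hk,
      smul_smul, mul_one_div_cancel hk0.ne', one_smul, sub_self]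
  have hgrads : ∑ i ∈ range k, gradient f (x i) = -(ℓ • v k) :=
    sum_range_eq_neg_smul_of_momentum hℓ.ne' hv0 (fun m => by simpa using hv (m + 1) m.succ_pos) k
  have hgap := norm_card_smul_sub_sum_le_of_fderiv_holder hf' hν0 (fun z => hHolder z (xbar k))
    (range k) x hmean
  have hpow : ∑ i ∈ range k, ‖x i - xbar k‖ ^ (1 + ν) ≤ k * (k * S k / 8) ^ ((1 + ν) / 2) := by
    refine (sum_norm_rpow_le_card_mul_rpow_mean_sq (range k) (fun i => x i - xbar k)
      (by linarith) (by linarith)).trans ?_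
    have hvar : (∑ i ∈ range k, ‖x i - xbar k‖ ^ 2) / k ≤ k * S k / 8 := by
      rw [div_le_iff₀ hk0, hS]
      nlinarith [sum_range_norm_sub_sq_le_of_increments
        (fun m => by simpa using hx (m + 1) m.succ_pos) hk hmean]
    rw [card_range]
    gcongr
  rw [card_range, hgrads, sub_neg_eq_add] at hgap
  have htri := norm_le_norm_sub_add ((k : ℝ) • gradient f (xbar k)) (-(ℓ • v k))
  rw [sub_neg_eq_add, norm_neg, norm_smul_of_nonneg hk0.le, norm_smul_of_nonneg hℓ.le] at htri
  refine le_of_mul_le_mul_left ?_ hk0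
  calc (k : ℝ) * ‖gradient f (xbar k)‖
      ≤ ℓ * ‖v k‖ + H / (1 + ν) * ∑ i ∈ range k, ‖x i - xbar k‖ ^ (1 + ν) := by linarith
    _ ≤ ℓ * ‖v k‖ + H / (1 + ν) * (k * (k * S k / 8) ^ ((1 + ν) / 2)) := by gcongr
    _ = k * ((ℓ / k) * ‖v k‖ + H / (1 + ν) * ((k * S k) / 8) ^ ((1 + ν) / 2)) := by
        field_simp

theorem grad_norm_xbar_upperbound (d : ℕ) (f : EuclideanSpace ℝ (Fin d) → ℝ)
    (hf : ∀ x, DifferentiableAt ℝ f x)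
    (hf' : ∀ x, DifferentiableAt ℝ (gradient f) x)
    (ν : ℝ) (hν0 : 0 ≤ ν) (hν1 : ν ≤ 1)
    (H : ℝ) (hH : 0 ≤ H)
    (hHolder : ∀ x y, ‖fderiv ℝ (gradient f) x - fderiv ℝ (gradient f) y‖ ≤ H * ‖x - y‖ ^ ν)
    (ℓ : ℝ) (hℓ : 0 < ℓ)
    (x v : ℕ → EuclideanSpace ℝ (Fin d))
    (hv0 : v 0 = 0)
    (hv : ∀ k, 1 ≤ k → v k = v (k - 1) - (1 / ℓ) • gradient f (x (k - 1)))
    (hx : ∀ k, 1 ≤ k → x k = x (k - 1) + v k)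
    (xbar : ℕ → EuclideanSpace ℝ (Fin d))
    (hxbar : ∀ k, 1 ≤ k → xbar k = (1 / (k : ℝ)) • ∑ i ∈ range k, x i)
    (S : ℕ → ℝ) (hS : ∀ k, S k = ∑ i ∈ Icc 1 k, ‖v i‖ ^ 2)
    (k : ℕ) (hk : 1 ≤ k) :
    ‖gradient f (xbar k)‖
      ≤ (ℓ / k) * ‖v k‖ + H / (1 + ν) * ((k * S k) / 8) ^ ((1 + ν) / 2) :=
  grad_norm_xbar_upperbound_general d f hf' ν hν0 hν1 H hH hHolder ℓ hℓ x v hv0 hv hx xbar hxbar S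
    hS k hk
end

section
/- Let v₁,…,vₖ₋₁ ∈ ℝᵈ and let x₀,…,xₖ₋₁ be defined by xⱼ = x₀ + Σ_{l=1}^{j} v_l. Then Σ_{0 ≤ i < j < k} ‖xᵢ − xⱼ‖² ≤ (k/2) Σ_{l=1}^{k−1} l (k − l) ‖v_l‖² ≤ (k³/8) Σ_{l=1}^{k−1} ‖v_l‖². -/
/-!
Since `x j - x i = ∑ l ∈ (i, j], v l`, the triangle and Cauchy–Schwarz inequalities give
`‖x i - x j‖² ≤ (j - i) ∑ l ∈ (i, j], ‖v l‖²`. Summing over the pairs `i < j`, the term `‖v l‖²`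
is weighted by `∑ (j - i)` over `i < l ≤ j < k`, which evaluates to `k l (k - l) / 2`. The second
inequality is `l (k - l) ≤ k² / 4`.
-/

open Finset

theorem norm_sum_sq_le_card_mul_sum_norm_sq {ι E : Type*} [SeminormedAddCommGroup E]
    (s : Finset ι) (f : ι → E) : ‖∑ i ∈ s, f i‖ ^ 2 ≤ #s * ∑ i ∈ s, ‖f i‖ ^ 2 :=
  (pow_le_pow_left₀ (norm_nonneg _) (norm_sum_le _ _) 2).trans sq_sum_le_card_mul_sum_sq

theorem sum_Icc_one_sub_sum_Icc_one {M : Type*} [AddCommGroup M] (v : ℕ → M) {i j : ℕ}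
    (hij : i ≤ j) : ∑ l ∈ Icc 1 j, v l - ∑ l ∈ Icc 1 i, v l = ∑ l ∈ Ioc i j, v l := by
  rw [← zero_add 1, Icc_add_one_left_eq_Ioc, Icc_add_one_left_eq_Ioc, sub_eq_iff_eq_add',
    sum_Ioc_consecutive v i.zero_le hij]

theorem sum_range_sum_Ico_sub {l k : ℕ} (hlk : l ≤ k) :
    ∑ i ∈ range l, ∑ j ∈ Ico l k, ((j : ℝ) - i) = k / 2 * (l * (k - l)) := by
  simp only [sum_sub_distrib, sum_const, card_range, nsmul_eq_mul, ← mul_sum,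
    sum_Ico_eq_sub _ hlk, sum_range_natCast]
  ring

theorem sum_pairs_mul_sum_Ioc (k : ℕ) (a : ℕ → ℝ) :
    ∑ i ∈ range k, ∑ j ∈ range k with i < j, ((j : ℝ) - i) * ∑ l ∈ Ioc i j, a l
      = ∑ l ∈ Icc 1 (k - 1), k / 2 * (l * (k - l)) * a l := by
  calc ∑ i ∈ range k, ∑ j ∈ range k with i < j, ((j : ℝ) - i) * ∑ l ∈ Ioc i j, a l
      = ∑ i ∈ range k, ∑ l ∈ Ioc i (k - 1), ∑ j ∈ Ico l k, ((j : ℝ) - i) * a l := by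
        refine sum_congr rfl fun i _ => ?_
        simp only [mul_sum]
        exact sum_comm' fun j l => by simp only [mem_filter, mem_range, mem_Ioc, mem_Ico]; omega
    _ = ∑ l ∈ Icc 1 (k - 1), ∑ i ∈ range l, ∑ j ∈ Ico l k, ((j : ℝ) - i) * a l :=
        sum_comm' fun i l => by simp only [mem_range, mem_Ioc, mem_Icc]; omega
    _ = ∑ l ∈ Icc 1 (k - 1), k / 2 * (l * (k - l)) * a l := by
        refine sum_congr rfl fun l hl => ?_
        simp only [← sum_mul]
        rw [sum_range_sum_Ico_sub (by simp only [mem_Icc] at hl; omega)]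

theorem mul_sub_le_sq_div_four (a b : ℝ) : a * (b - a) ≤ b ^ 2 / 4 := by
  nlinarith [sq_nonneg (b - 2 * a)]

theorem pairwise_dist_bound (d k : ℕ)
    (x₀ : EuclideanSpace ℝ (Fin d)) (v : ℕ → EuclideanSpace ℝ (Fin d))
    (x : ℕ → EuclideanSpace ℝ (Fin d))
    (hx : ∀ j, j < k → x j = x₀ + ∑ l ∈ Icc 1 j, v l) :
    (∑ i ∈ range k, ∑ j ∈ range k with i < j, ‖x i - x j‖ ^ 2
        ≤ (k : ℝ) / 2 * ∑ l ∈ Icc 1 (k - 1), (l : ℝ) * ((k : ℝ) - l) * ‖v l‖ ^ 2) ∧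
    ((k : ℝ) / 2 * ∑ l ∈ Icc 1 (k - 1), (l : ℝ) * ((k : ℝ) - l) * ‖v l‖ ^ 2
        ≤ (k : ℝ) ^ 3 / 8 * ∑ l ∈ Icc 1 (k - 1), ‖v l‖ ^ 2) := by
  have hstep : ∀ i j, j < k → i < j →
      ‖x i - x j‖ ^ 2 ≤ ((j : ℝ) - i) * ∑ l ∈ Ioc i j, ‖v l‖ ^ 2 := fun i j hjk hij => by
    rw [norm_sub_rev, hx j hjk, hx i (hij.trans hjk), add_sub_add_left_eq_sub,
      sum_Icc_one_sub_sum_Icc_one v hij.le, ← Nat.cast_sub hij.le, ← Nat.card_Ioc]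
    exact norm_sum_sq_le_card_mul_sum_norm_sq _ _
  constructor
  · calc ∑ i ∈ range k, ∑ j ∈ range k with i < j, ‖x i - x j‖ ^ 2
        ≤ ∑ i ∈ range k, ∑ j ∈ range k with i < j, ((j : ℝ) - i) * ∑ l ∈ Ioc i j, ‖v l‖ ^ 2 := by
          gcongr with i _ j hj
          rw [mem_filter, mem_range] at hj
          exact hstep i j hj.1 hj.2
      _ = _ := by
          rw [sum_pairs_mul_sum_Ioc, mul_sum]
          exact sum_congr rfl fun _ _ => by ring
  · rw [mul_sum, mul_sum]
    refine sum_le_sum fun l _ => ?_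
    calc (k : ℝ) / 2 * ((l : ℝ) * (k - l) * ‖v l‖ ^ 2)
        = k / 2 * ((l : ℝ) * (k - l)) * ‖v l‖ ^ 2 := by ring
      _ ≤ k / 2 * (k ^ 2 / 4) * ‖v l‖ ^ 2 := by gcongr; exact mul_sub_le_sq_div_four _ _
      _ = k ^ 3 / 8 * ‖v l‖ ^ 2 := by ring
end

section
/- Let f : ℝᵈ → ℝ be differentiable with L-Lipschitz gradient, and let the heavy-ball iterates satisfy v₀ = 0, vₖ = vₖ₋₁ − (1/ℓ)∇f(xₖ₋₁), xₖ = xₖ₋₁ + vₖ. If the descent condition f(xᵢ) − f(xᵢ₋₁) ≤ ⟨∇f(xᵢ₋₁), vᵢ⟩ + (ℓ/2)‖vᵢ‖² holds for 1 ≤ i ≤ k, and if hₖ₋₁ ≥ 0 satisfies f(xᵢ) − f(xᵢ₋₁) ≤ (1/2)⟨∇f(xᵢ₋₁)+∇f(xᵢ), vᵢ⟩ + (hₖ₋₁/3)‖vᵢ‖² for 1 ≤ i < k, together with k(k−1)hₖ₋₁ ≤ (3/8)ℓ, then min_{1≤i≤k} f(xᵢ) ≤ f(x₀) − ℓ Sₖ/(4k),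 where Sₖ = Σ_{i=1}^{k}‖vᵢ‖². -/
/-!
With `∇f(xᵢ) = ℓ (vᵢ - vᵢ₊₁)`, the trapezoid estimates telescope to
`f(xₘ) - f(x₀) ≤ -(ℓ/2)⟪vₘ, vₘ₊₁⟫ + (h/3) Sₘ` for `m < k`, and adding the descent condition at
step `m + 1` cancels the cross term: `f(xₘ) + f(xₘ₊₁) ≤ 2 f(x₀) + (2h/3) Sₘ - (ℓ/2)‖vₘ₊₁‖²`.
Summing over `m < k` and using `∑ₘ Sₘ ≤ (k - 1) Sₖ` gives
`(2k - 1)(f(x₀) - minᵢ f(xᵢ)) ≥ (ℓ/2 - (2h/3)(k - 1)) Sₖ ≥ (2k - 1) ℓ Sₖ / (4k)`,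
the last step being the restart condition `k(k - 1)h ≤ 3ℓ/8`.
-/

open Finset

namespace HeavyBall

theorem sum_range_succ_le_mul_of_monotone {P : ℕ → ℝ} (hP : Monotone P) (hP0 : P 0 = 0) (n : ℕ) :
    ∑ m ∈ range (n + 1), P m ≤ n * P n := by
  rw [sum_range_succ', hP0, add_zero]
  simpa using sum_le_card_nsmul (range n) (fun m ↦ P (m + 1)) (P n)
    fun m hm ↦ hP (mem_range.mp hm)

theorem mul_le_sum_range_add_succ {F : ℕ → ℝ} {μ : ℝ} {n : ℕ}
    (hμ : ∀ i ∈ Icc 1 (n + 1), μ ≤ F i) :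
    F 0 + (2 * n + 1) * μ ≤ ∑ m ∈ range (n + 1), (F m + F (m + 1)) := by
  have hlo : n * μ ≤ ∑ m ∈ range n, F (m + 1) := by
    simpa using card_nsmul_le_sum (range n) (fun m ↦ F (m + 1)) μ
      fun m hm ↦ hμ _ (mem_Icc.mpr ⟨by omega, by simp at hm; omega⟩)
  have hhi : (n + 1) * μ ≤ ∑ m ∈ range (n + 1), F (m + 1) := by
    simpa using card_nsmul_le_sum (range (n + 1)) (fun m ↦ F (m + 1)) μ
      fun m hm ↦ hμ _ (mem_Icc.mpr ⟨by omega, by simp at hm; omega⟩)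
  rw [sum_add_distrib, sum_range_succ']
  linarith

section InnerProduct

variable {E : Type*} [NormedAddCommGroup E] [InnerProductSpace ℝ E] {ℓ : ℝ}

theorem eq_smul_sub_of_eq_sub_smul (hℓ : ℓ ≠ 0) {g a b : E} (hb : b = a - (1 / ℓ) • g) :
    g = ℓ • (a - b) := by
  rw [hb, sub_sub_cancel, smul_smul, mul_one_div_cancel hℓ, one_smul]

theorem half_inner_add_smul_sub (ℓ : ℝ) (a b c : E) :
    1 / 2 * inner ℝ (ℓ • (a - b) + ℓ • (b - c)) b = ℓ / 2 * (inner ℝ a b - inner ℝ b c) := by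
  rw [← smul_add, sub_add_sub_cancel, real_inner_smul_left, inner_sub_left, real_inner_comm c]
  ring

theorem inner_smul_sub_add_sq (ℓ : ℝ) (a b : E) :
    inner ℝ (ℓ • (a - b)) b + ℓ / 2 * ‖b‖ ^ 2 = ℓ * inner ℝ a b - ℓ / 2 * ‖b‖ ^ 2 := by
  rw [real_inner_smul_left, inner_sub_left, real_inner_self_eq_norm_sq]
  ring

end InnerProduct

section RealSequences

variable {F c q : ℕ → ℝ} {ℓ h : ℝ} {k : ℕ}

theorem sub_le_of_telescoping_estimate (hc0 : c 0 = 0)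
    (hest : ∀ i, i + 1 < k → F (i + 1) - F i ≤ ℓ / 2 * (c i - c (i + 1)) + h / 3 * q (i + 1))
    {m : ℕ} (hm : m < k) : F m - F 0 ≤ -(ℓ / 2) * c m + h / 3 * ∑ j ∈ Icc 1 m, q j := by
  induction m with
  | zero => simp [hc0]
  | succ m ih =>
    have := hest m hm
    rw [sum_Icc_succ_top (by omega)]
    linarith [ih (by omega)]

theorem add_succ_le (hc0 : c 0 = 0)
    (hest : ∀ i, i + 1 < k → F (i + 1) - F i ≤ ℓ / 2 * (c i - c (i + 1)) + h / 3 * q (i + 1))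
    (hdesc : ∀ i, i + 1 ≤ k → F (i + 1) - F i ≤ ℓ * c i - ℓ / 2 * q (i + 1))
    {m : ℕ} (hm : m < k) :
    F m + F (m + 1) ≤ 2 * F 0 + 2 * h / 3 * ∑ j ∈ Icc 1 m, q j - ℓ / 2 * q (m + 1) := by
  linarith [sub_le_of_telescoping_estimate hc0 hest hm, hdesc m hm]

theorem le_sub_div_of_estimates {μ : ℝ} (hh : 0 ≤ h) (hk : 1 ≤ k)
    (hc0 : c 0 = 0) (hq : ∀ j, 0 ≤ q j)
    (hest : ∀ i, i + 1 < k → F (i + 1) - F i ≤ ℓ / 2 * (c i - c (i + 1)) + h / 3 * q (i + 1))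
    (hdesc : ∀ i, i + 1 ≤ k → F (i + 1) - F i ≤ ℓ * c i - ℓ / 2 * q (i + 1))
    (hrestart : (k : ℝ) * ((k : ℝ) - 1) * h ≤ 3 / 8 * ℓ) (hμ : ∀ i ∈ Icc 1 k, μ ≤ F i) :
    μ ≤ F 0 - ℓ * (∑ j ∈ Icc 1 k, q j) / (4 * k) := by
  obtain ⟨n, rfl⟩ : ∃ n, k = n + 1 := ⟨k - 1, by omega⟩
  set S : ℕ → ℝ := fun m ↦ ∑ j ∈ Icc 1 m, q j with hS
  have hS0 : S 0 = 0 := by simp [hS]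
  have hS_mono : Monotone S := fun a b hab ↦
    sum_le_sum_of_subset_of_nonneg (Icc_subset_Icc_right hab) fun j _ _ ↦ hq j
  have hq_succ : ∀ m, q (m + 1) = S (m + 1) - S m := fun m ↦ by
    simp only [hS, sum_Icc_succ_top (Nat.le_add_left 1 m), add_sub_cancel_left]
  have hpairs : ∑ m ∈ range (n + 1), (F m + F (m + 1)) ≤
      (n + 1) * (2 * F 0) + 2 * h / 3 * ∑ m ∈ range (n + 1), S m - ℓ / 2 * S (n + 1) := by
    calc ∑ m ∈ range (n + 1), (F m + F (m + 1))
        ≤ ∑ m ∈ range (n + 1), (2 * F 0 + 2 * h / 3 * S m - ℓ / 2 * (S (m + 1) - S m)) :=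
          sum_le_sum fun m hm ↦ hq_succ m ▸ add_succ_le hc0 hest hdesc (mem_range.mp hm)
      _ = _ := by
          rw [sum_sub_distrib, sum_add_distrib, ← mul_sum _ _ (2 * h / 3), ← mul_sum _ _ (ℓ / 2),
            sum_range_sub, hS0, sum_const, card_range, nsmul_eq_mul]
          push_cast
          ring
  have hSsum := sum_range_succ_le_mul_of_monotone hS_mono hS0 n
  have hlower := mul_le_sum_range_add_succ hμ
  have hSn : n * S n ≤ n * S (n + 1) := by gcongr; exact hS_mono n.le_succ
  have hS_nonneg : 0 ≤ S (n + 1) := hS0 ▸ hS_mono (Nat.zero_le _)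
  have hgap : (ℓ / 2 - 2 * h / 3 * n) * S (n + 1) ≤ (2 * n + 1) * (F 0 - μ) := by
    have h23 : 0 ≤ 2 * h / 3 := by positivity
    linarith [mul_le_mul_of_nonneg_left hSsum h23, mul_le_mul_of_nonneg_left hSn h23]
  have hrestart' : 8 / 3 * h * n * (n + 1) ≤ ℓ := by push_cast at hrestart; linarith
  rw [le_sub_iff_add_le, ← le_sub_iff_add_le', div_le_iff₀ (by positivity)]
  refine le_of_mul_le_mul_left ?_ (by positivity : (0 : ℝ) < 2 * n + 1)
  push_cast
  nlinarith [mul_le_mul_of_nonneg_right hrestart' hS_nonneg]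

end RealSequences

end HeavyBall

theorem decrease_epoch_general (d : ℕ) (f : EuclideanSpace ℝ (Fin d) → ℝ)
    (ℓ : ℝ) (hℓ : 0 < ℓ)
    (x v : ℕ → EuclideanSpace ℝ (Fin d))
    (hv0 : v 0 = 0)
    (hv : ∀ i, 1 ≤ i → v i = v (i - 1) - (1 / ℓ) • gradient f (x (i - 1)))
    (S : ℕ → ℝ) (hS : ∀ i, S i = ∑ j ∈ Icc 1 i, ‖v j‖ ^ 2)
    (k : ℕ) (hk : 1 ≤ k)
    (hdesc : ∀ i, 1 ≤ i → i ≤ k →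
      f (x i) - f (x (i - 1)) ≤ inner ℝ (gradient f (x (i - 1))) (v i) + ℓ / 2 * ‖v i‖ ^ 2)
    (h : ℝ) (hh : 0 ≤ h)
    (hest : ∀ i, 1 ≤ i → i < k →
      f (x i) - f (x (i - 1)) ≤
        (1 / 2) * inner ℝ (gradient f (x (i - 1)) + gradient f (x i)) (v i) + h / 3 * ‖v i‖ ^ 2)
    (hrestart : (k : ℝ) * ((k : ℝ) - 1) * h ≤ 3 / 8 * ℓ)
    (hne : (Icc 1 k).Nonempty) :
    (Icc 1 k).inf' hne (fun i => f (x i)) ≤ f (x 0) - ℓ * S k / (4 * k) := by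
  have hgrad : ∀ i, gradient f (x i) = ℓ • (v i - v (i + 1)) := fun i ↦
    HeavyBall.eq_smul_sub_of_eq_sub_smul hℓ.ne' <| by
      simpa only [Nat.add_sub_cancel] using hv (i + 1) (by omega)
  rw [hS]
  refine HeavyBall.le_sub_div_of_estimates (F := fun i ↦ f (x i))
    (c := fun i ↦ inner ℝ (v i) (v (i + 1))) (q := fun j ↦ ‖v j‖ ^ 2) hh hk (by simp [hv0])
    (fun j ↦ by positivity) (fun i hi ↦ ?_) (fun i hi ↦ ?_) hrestart
    fun i hi ↦ inf'_le _ hi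
  · have := hest (i + 1) (by omega) hi
    rwa [Nat.add_sub_cancel, hgrad, hgrad, HeavyBall.half_inner_add_smul_sub] at this
  · have := hdesc (i + 1) (by omega) hi
    rwa [Nat.add_sub_cancel, hgrad, HeavyBall.inner_smul_sub_add_sq] at this

theorem decrease_epoch (d : ℕ) (f : EuclideanSpace ℝ (Fin d) → ℝ)
    (hf : ∀ x, DifferentiableAt ℝ f x)
    (L : ℝ) (hL : 0 < L)
    (hLip : ∀ x y, ‖gradient f x - gradient f y‖ ≤ L * ‖x - y‖)
    (ℓ : ℝ) (hℓ : 0 < ℓ)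
    (x v : ℕ → EuclideanSpace ℝ (Fin d))
    (hv0 : v 0 = 0)
    (hv : ∀ i, 1 ≤ i → v i = v (i - 1) - (1 / ℓ) • gradient f (x (i - 1)))
    (hx : ∀ i, 1 ≤ i → x i = x (i - 1) + v i)
    (S : ℕ → ℝ) (hS : ∀ i, S i = ∑ j ∈ Icc 1 i, ‖v j‖ ^ 2)
    (k : ℕ) (hk : 1 ≤ k)
    (hdesc : ∀ i, 1 ≤ i → i ≤ k →
      f (x i) - f (x (i - 1)) ≤ inner ℝ (gradient f (x (i - 1))) (v i) + ℓ / 2 * ‖v i‖ ^ 2)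
    (h : ℝ) (hh : 0 ≤ h)
    (hest : ∀ i, 1 ≤ i → i < k →
      f (x i) - f (x (i - 1)) ≤
        (1 / 2) * inner ℝ (gradient f (x (i - 1)) + gradient f (x i)) (v i) + h / 3 * ‖v i‖ ^ 2)
    (hrestart : (k : ℝ) * ((k : ℝ) - 1) * h ≤ 3 / 8 * ℓ)
    (hne : (Icc 1 k).Nonempty) :
    (Icc 1 k).inf' hne (fun i => f (x i)) ≤ f (x 0) - ℓ * S k / (4 * k) :=
  decrease_epoch_general d f ℓ hℓ x v hv0 hv S hS k hk hdesc h hh hest hrestart hne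
end
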